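/- arXiv:2205.11724 — 8 statements merged into one kernel-verified Lean document; each statement's English description precedes it below -/
import Mathlib

section
/- If R is a Nil*-Noetherian commutative ring and I is a nil ideal of R, then the quotient ring R/I is Nil*-Noetherian. -/
/-- A commutative ring is Nil*-Noetherian if every nil ideal is finitely generated. -/
def IsNilStarNoetherianRing (R : Type*) [CommRing R] : Prop :=
  ∀ I : Ideal R, I ≤ nilradical R → I.FG

theorem comap_nilradical_of_ker_le_nilradical {R S : Type*} [CommRing R] [CommRing S]
    (f : R →+* S) (hker : RingHom.ker f ≤ nilradical R) :
    (nilradical S).comap f = nilradical R := by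
  refine le_antisymm ?_ ?_
  · rw [nilradical, Ideal.comap_radical, Ideal.zero_eq_bot, ← RingHom.ker_eq_comap_bot]
    exact Ideal.radical_le_radical_iff.mpr hker
  · exact fun x hx => (mem_nilradical.mp hx).map f

theorem IsNilStarNoetherianRing.of_surjective {R S : Type*} [CommRing R] [CommRing S]
    (hR : IsNilStarNoetherianRing R) (f : R →+* S) (hf : Function.Surjective f)
    (hker : RingHom.ker f ≤ nilradical R) : IsNilStarNoetherianRing S := by
  intro J hJ
  have hJR : J.comap f ≤ nilradical R :=
    comap_nilradical_of_ker_le_nilradical f hker ▸ Ideal.comap_mono hJ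
  rw [← Ideal.map_comap_of_surjective f hf J]
  exact (hR _ hJR).map f

theorem isNilStarNoetherianRing_quotient (R : Type*) [CommRing R]
    (hR : IsNilStarNoetherianRing R) (I : Ideal R) (hI : I ≤ nilradical R) :
    IsNilStarNoetherianRing (R ⧸ I) :=
  hR.of_surjective (Ideal.Quotient.mk I) Ideal.Quotient.mk_surjective
    (by rwa [Ideal.mk_ker])
end

section
/- A finite direct product of rings R = R₁ × ⋯ × Rₙ is Nil*-Noetherian if and only if each Rᵢ is Nil*-Noetherian. -/
theorem IsNilpotent.pi_single {ι : Type*} [DecidableEq ι] {R : ι → Type*}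
    [∀ i, MonoidWithZero (R i)] {i : ι} {a : R i} (h : IsNilpotent a) :
    IsNilpotent (Pi.single i a) := by
  obtain ⟨n, hn⟩ := h
  refine ⟨n + 1, funext fun j => ?_⟩
  rcases eq_or_ne j i with rfl | hj
  · simp [pow_succ', hn]
  · simp [hj]

theorem Ideal.map_le_nilradical {A B : Type*} [CommSemiring A] [CommSemiring B] (f : A →+* B)
    {I : Ideal A} (hI : I ≤ nilradical A) : I.map f ≤ nilradical B :=
  Ideal.map_le_iff_le_comap.mpr fun _ hx => mem_nilradical.mpr ((mem_nilradical.mp (hI hx)).map f)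

namespace Ideal

variable {ι : Type*} [DecidableEq ι] {R : ι → Type*} [∀ i, Semiring (R i)]

theorem mem_of_forall_single_mem [Finite ι] {I : Ideal (Π i, R i)} {x : Π i, R i}
    (h : ∀ i, Pi.single i (x i) ∈ I) : x ∈ I := by
  cases nonempty_fintype ι
  rw [← Finset.univ_sum_single x]
  exact I.sum_mem fun i _ => h i

theorem single_mem_of_mem_map_evalRingHom {I : Ideal (Π i, R i)} {i : ι} {a : R i}
    (ha : a ∈ I.map (Pi.evalRingHom R i)) : Pi.single i a ∈ I := by
  obtain ⟨x, hx, rfl⟩ := (mem_map_iff_of_surjective _ (Function.surjective_eval i)).mp ha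
  simpa [← Pi.single_mul_left] using I.mul_mem_left (Pi.single i 1) hx

end Ideal

theorem Ideal.fg_of_forall_fg_map_evalRingHom {ι : Type*} [Finite ι] {R : ι → Type*}
    [∀ i, Semiring (R i)] (I : Ideal (Π i, R i))
    (h : ∀ i, (I.map (Pi.evalRingHom R i)).FG) : I.FG := by
  classical
  choose s hs using h
  set S : Set (Π i, R i) := ⋃ i, Pi.single i '' (s i : Set (R i))
  have hS : span S ≤ I := span_le.mpr <| by
    simp only [S, Set.iUnion_subset_iff, Set.image_subset_iff]
    intro i a ha
    exact single_mem_of_mem_map_evalRingHom (hs i ▸ subset_span ha)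
  have hmap (i : ι) : I.map (Pi.evalRingHom R i) ≤ (span S).map (Pi.evalRingHom R i) := by
    rw [← hs i, span_le]
    intro a ha
    simpa using mem_map_of_mem (Pi.evalRingHom R i)
      (subset_span (Set.mem_iUnion_of_mem i ⟨a, ha, rfl⟩) : Pi.single i a ∈ span S)
  refine Submodule.fg_def.mpr ⟨S, Set.finite_iUnion fun i => (s i).finite_toSet.image _, ?_⟩
  refine le_antisymm hS fun x hx => mem_of_forall_single_mem fun i => ?_
  exact single_mem_of_mem_map_evalRingHom (hmap i (mem_map_of_mem _ hx))

namespace IsNilStarNoetherianRing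

variable {ι : Type*} {R : ι → Type*} [∀ i, CommRing (R i)]

theorem of_pi (h : IsNilStarNoetherianRing (Π i, R i)) (i : ι) :
    IsNilStarNoetherianRing (R i) := by
  classical
  intro I hI
  have hnil : Ideal.span (Pi.single i '' I) ≤ nilradical (Π i, R i) := by
    rw [Ideal.span_le]
    rintro _ ⟨a, ha, rfl⟩
    exact mem_nilradical.mpr (mem_nilradical.mp (hI ha)).pi_single
  simpa [Ideal.map_span, Set.image_image] using (h _ hnil).map (Pi.evalRingHom R i)

theorem pi [Finite ι] (h : ∀ i, IsNilStarNoetherianRing (R i)) :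
    IsNilStarNoetherianRing (Π i, R i) := fun I hI =>
  Ideal.fg_of_forall_fg_map_evalRingHom I fun i => h i _ (Ideal.map_le_nilradical _ hI)

end IsNilStarNoetherianRing

theorem isNilStarNoetherianRing_pi_iff {ι : Type*} [Fintype ι]
    (R : ι → Type*) [∀ i, CommRing (R i)] :
    IsNilStarNoetherianRing (∀ i, R i) ↔ ∀ i, IsNilStarNoetherianRing (R i) :=
  ⟨fun h i => h.of_pi i, IsNilStarNoetherianRing.pi⟩
end

section
/- A commutative ring R is Nil*-Noetherian if and only if the polynomial ring R[x] is Nil*-Noetherian. -/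
/-! If the nilradical `N` of `R` is a Noetherian `R`-module, then `R ⧸ ann N` embeds into a
finite power of `N`, so it is a Noetherian ring. The nilradical of `R[X]` is `N[X]`: it is
finitely generated and killed by `(ann N)[X]`, and `R[X] ⧸ (ann N)[X] ≅ (R ⧸ ann N)[X]` is
Noetherian by the Hilbert basis theorem. Hence `N[X]` is a finite module over a Noetherian ring,
and every nil ideal of `R[X]` is finitely generated. Conversely, `I ↦ I[X]` followed by
evaluation at `0` recovers nil ideals of `R` from nil ideals of `R[X]`. -/

open scoped Polynomial

theorem isNilStarNoetherianRing_iff_isNoetherian_nilradical (R : Type*) [CommRing R] :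
    IsNilStarNoetherianRing R ↔ IsNoetherian R (nilradical R) :=
  isNoetherian_submodule.symm

theorem isNoetherianRing_quotient_annihilator (R M : Type*) [CommRing R] [AddCommGroup M]
    [Module R M] [IsNoetherian R M] : IsNoetherianRing (R ⧸ Module.annihilator R M) := by
  obtain ⟨n, s, hs⟩ := Module.Finite.exists_fin (R := R) (M := M)
  let f : R →ₗ[R] Fin n → M := LinearMap.pi fun i ↦ LinearMap.toSpanSingleton R M (s i)
  have hker : LinearMap.ker f = Module.annihilator R M := by
    ext r
    rw [← Submodule.annihilator_top, ← hs, Submodule.mem_annihilator_span]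
    simp [f, funext_iff]
  have : IsNoetherian R (R ⧸ LinearMap.ker f) :=
    isNoetherian_of_linearEquiv f.quotKerEquivRange.symm
  rw [hker] at this
  exact isNoetherianRing_iff.mpr (isNoetherian_of_tower R this)

theorem isNoetherian_of_le_annihilator {S M : Type*} [CommRing S] [AddCommGroup M]
    [Module S M] [Module.Finite S M] {A : Ideal S} [IsNoetherianRing (S ⧸ A)]
    (hA : A ≤ Module.annihilator S M) : IsNoetherian S M := by
  have hM := (Module.isTorsionBySet_iff_subset_annihilator S M).mpr hA
  let := hM.module
  have := hM.isScalarTower (S := S)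
  have : Module.Finite (S ⧸ A) M := Module.Finite.of_restrictScalars_finite S _ _
  refine ⟨fun p ↦ ?_⟩
  obtain ⟨T, hT⟩ := IsNoetherian.noetherian (Submodule.span (S ⧸ A) (p : Set M))
  have hspan := Submodule.restrictScalars_span S (S ⧸ A) (M := M) Ideal.Quotient.mk_surjective
  refine ⟨T, ?_⟩
  calc Submodule.span S (T : Set M)
      = (Submodule.span (S ⧸ A) (T : Set M)).restrictScalars S := (hspan _).symm
    _ = Submodule.span S (p : Set M) := by rw [hT, hspan]
    _ = p := Submodule.span_eq p

theorem Ideal.FG.of_map_of_leftInverse {R S : Type*} [CommRing R] [CommRing S] {f : R →+* S}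
    {g : S →+* R} (hgf : Function.LeftInverse g f) {I : Ideal R} (hI : (I.map f).FG) : I.FG := by
  have hcomp : g.comp f = RingHom.id R := RingHom.ext hgf
  simpa only [Ideal.map_map, hcomp, Ideal.map_id] using hI.map g

namespace Polynomial

variable {R : Type*} [CommRing R]

theorem nilradical_eq_map_C : nilradical R[X] = (nilradical R).map C := by
  ext f
  simp only [mem_nilradical, Polynomial.isNilpotent_iff, Ideal.mem_map_C_iff]

theorem map_C_annihilator_le_annihilator_map_C (I : Ideal R) :
    I.annihilator.map C ≤ (I.map (C : R →+* R[X])).annihilator := by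
  rw [Ideal.map_le_iff_le_comap]
  intro a ha
  rw [Ideal.mem_comap, Submodule.mem_annihilator]
  intro f hf
  ext n
  rw [smul_eq_mul, coeff_C_mul, coeff_zero]
  exact Submodule.mem_annihilator.mp ha _ (Ideal.mem_map_C_iff.mp hf n)

theorem isNoetherian_nilradical [IsNoetherian R (nilradical R)] :
    IsNoetherian R[X] (nilradical R[X]) := by
  set A := (nilradical R).annihilator
  have : IsNoetherianRing (R ⧸ A) := isNoetherianRing_quotient_annihilator R (nilradical R)
  have : IsNoetherianRing (R[X] ⧸ A.map C) :=
    isNoetherianRing_of_ringEquiv _ (Ideal.polynomialQuotientEquivQuotientPolynomial A)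
  have : Module.Finite R[X] (nilradical R[X]) := by
    rw [Module.Finite.iff_fg, nilradical_eq_map_C]
    exact Ideal.FG.map (isNoetherian_submodule.mp ‹_› _ le_rfl) _
  have hA : A.map C ≤ (nilradical R[X]).annihilator :=
    nilradical_eq_map_C (R := R) ▸ map_C_annihilator_le_annihilator_map_C _
  exact isNoetherian_of_le_annihilator hA

end Polynomial

theorem isNilStarNoetherianRing_polynomial_iff (R : Type*) [CommRing R] :
    IsNilStarNoetherianRing R ↔ IsNilStarNoetherianRing (Polynomial R) := by
  constructor
  · intro h
    rw [isNilStarNoetherianRing_iff_isNoetherian_nilradical] at h ⊢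
    exact Polynomial.isNoetherian_nilradical
  · intro h I hI
    have hIX : I.map Polynomial.C ≤ nilradical R[X] :=
      Polynomial.nilradical_eq_map_C (R := R) ▸ Ideal.map_mono hI
    exact (h _ hIX).of_map_of_leftInverse (g := Polynomial.constantCoeff)
      fun _ ↦ Polynomial.coeff_C_zero
end

section
/- If the formal power series ring R[[x]] is Nil*-Noetherian, then R is Nil*-Noetherian. -/
theorem IsNilStarNoetherianRing.of_retraction {R S : Type*} [CommRing R] [CommRing S]
    (f : R →+* S) (g : S →+* R) (hgf : g.comp f = RingHom.id R)
    (hS : IsNilStarNoetherianRing S) : IsNilStarNoetherianRing R := by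
  intro I hI
  have hnil : I.map f ≤ nilradical S := Ideal.map_le_iff_le_comap.mpr fun a ha =>
    mem_nilradical.mpr ((mem_nilradical.mp (hI ha)).map f)
  have hretract : (I.map f).map g = I := by rw [Ideal.map_map, hgf, Ideal.map_id]
  exact hretract ▸ (hS _ hnil).map g

theorem isNilStarNoetherianRing_of_powerSeries (R : Type*) [CommRing R]
    (h : IsNilStarNoetherianRing (PowerSeries R)) : IsNilStarNoetherianRing R :=
  h.of_retraction PowerSeries.C PowerSeries.constantCoeff (RingHom.ext PowerSeries.constantCoeff_C)
end

section
/- Let S be a countably infinite product of copies of a field k, and e an idempotent of S with exactly one nonzero coordinate. The trivial extension R = S(+)Se is Nil*-Noetherian but is neither reduced nor Noetherian. -/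
theorem Pi.not_isNoetherianRing {ι R : Type*} [Infinite ι] [Semiring R] [Nontrivial R] :
    ¬ IsNoetherianRing (ι → R) := by
  classical
  intro hR
  obtain ⟨t, ht, hspan⟩ := (Submodule.fg_span_iff_fg_span_finset_subset _).mp
    ((isNoetherianRing_iff_ideal_fg _).mp hR (Ideal.span (Set.range fun i : ι ↦ Pi.single i 1)))
  have hsupp : (⋃ f ∈ (t : Set (ι → R)), Function.support f).Finite :=
    t.finite_toSet.biUnion fun f hf ↦ by
      obtain ⟨j, rfl⟩ := ht hf
      exact (Set.finite_singleton j).subset Pi.support_single_subset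
  obtain ⟨i, hi⟩ := hsupp.infinite_compl.nonempty
  have hle : Ideal.span (t : Set (ι → R)) ≤ RingHom.ker (Pi.evalRingHom (fun _ ↦ R) i) :=
    Ideal.span_le.mpr fun f hf ↦ by
      simpa using fun hfi ↦ hi (Set.mem_biUnion hf hfi)
  have hsingle : Pi.single i (1 : R) ∈ Submodule.span (ι → R) (t : Set (ι → R)) :=
    hspan ▸ Submodule.subset_span ⟨i, rfl⟩
  simpa using hle hsingle

section SpanSingleOne

variable {ι : Type*} [DecidableEq ι] {K : ι → Type*}

theorem Pi.mem_span_single_one_iff [∀ i, CommSemiring (K i)] {i : ι} {f : ∀ i, K i} :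
    f ∈ Ideal.span {Pi.single i 1} ↔ f = Pi.single i (f i) := by
  rw [Ideal.mem_span_singleton']
  constructor
  · rintro ⟨a, rfl⟩
    simp [← Pi.single_mul_right]
  · intro h
    exact ⟨f, by rw [← Pi.single_mul_right, mul_one, ← h]⟩

theorem Pi.isSimpleModule_span_single_one [∀ i, Field (K i)] (i : ι) :
    IsSimpleModule (∀ i, K i) (Ideal.span {Pi.single i 1} : Ideal (∀ i, K i)) := by
  have hne : ∀ x : (Ideal.span {Pi.single i 1} : Ideal (∀ i, K i)),
      x ≠ 0 → (x : ∀ i, K i) i ≠ 0 := by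
    intro x hx hxi
    apply hx
    ext1
    rw [Pi.mem_span_single_one_iff.mp x.2, hxi, Pi.single_zero]
    rfl
  refine isSimpleModule_iff_toSpanSingleton_surjective.mpr ⟨?_, fun x hx y ↦ ?_⟩
  · exact nontrivial_of_ne ⟨_, Ideal.subset_span rfl⟩ 0 (by simp [Subtype.ext_iff])
  refine ⟨Pi.single i ((y : ∀ i, K i) i / (x : ∀ i, K i) i), Subtype.ext ?_⟩
  rw [LinearMap.toSpanSingleton_apply, Submodule.coe_smul, smul_eq_mul, ← Pi.single_mul_left,
    div_mul_cancel₀ _ (hne x hx), ← Pi.mem_span_single_one_iff.mp y.2]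

end SpanSingleOne

namespace TrivSqZeroExt

section Semiring

variable {R M : Type*} [Semiring R] [AddCommMonoid M] [Module R M] [Module Rᵐᵒᵖ M]
  [SMulCommClass R Rᵐᵒᵖ M]

theorem not_isReduced [Nontrivial M] : ¬ IsReduced (TrivSqZeroExt R M) := by
  intro h
  obtain ⟨m, hm⟩ := exists_ne (0 : M)
  exact hm (inr_injective (h.eq_zero _ ⟨2, (pow_two (inr m : TrivSqZeroExt R M)).trans
    (inr_mul_inr R m m)⟩))

theorem _root_.IsNoetherianRing.of_trivSqZeroExt (h : IsNoetherianRing (TrivSqZeroExt R M)) :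
    IsNoetherianRing R :=
  isNoetherianRing_of_surjective _ _ (fstHom ℕ R M).toRingHom fst_surjective

end Semiring

section CommSemiring

variable {R M : Type*} [CommSemiring R] [AddCommMonoid M] [Module R M] [Module Rᵐᵒᵖ M]
  [IsCentralScalar R M]

theorem nilradical_le_kerIdeal [IsReduced R] : nilradical (TrivSqZeroExt R M) ≤ kerIdeal R M :=
  fun _ hx ↦ ((mem_nilradical.mp hx).map (fstHom R R M)).eq_zero

theorem fg_of_le_kerIdeal [IsNoetherian R M] {I : Ideal (TrivSqZeroExt R M)}
    (hI : I ≤ kerIdeal R M) : I.FG := by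
  obtain ⟨s, hs, hspan⟩ :=
    Submodule.fg_def.mp (IsNoetherian.noetherian ((I.restrictScalars R).comap (inrHom R M)))
  refine Submodule.fg_def.mpr ⟨inr '' s, hs.image _, le_antisymm ?_ ?_⟩
  · rw [Ideal.span_le]
    rintro _ ⟨m, hm, rfl⟩
    exact (hspan ▸ Submodule.subset_span hm : m ∈ _)
  · intro x hx
    have hx_inr := (mem_kerIdeal_iff_inr R M x).mp (hI hx)
    have hsnd : x.snd ∈ Submodule.span R s := hspan ▸ (hx_inr ▸ hx : inr x.snd ∈ I)
    have hmap := Submodule.mem_map_of_mem (f := inrHom R M) hsnd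
    rw [Submodule.map_span] at hmap
    rw [hx_inr]
    exact Submodule.span_le_restrictScalars R _ _ hmap

end CommSemiring

theorem isNilStarNoetherianRing {R M : Type*} [CommRing R] [AddCommGroup M] [Module R M]
    [Module Rᵐᵒᵖ M] [IsCentralScalar R M] [IsReduced R] [IsNoetherian R M] :
    IsNilStarNoetherianRing (TrivSqZeroExt R M) :=
  fun _ hI ↦ fg_of_le_kerIdeal (hI.trans nilradical_le_kerIdeal)

end TrivSqZeroExt

theorem example_nilStarNoetherian_not_reduced_not_noetherian (k : Type*) [Field k] :
    IsNilStarNoetherianRing (TrivSqZeroExt (ℕ → k) (Ideal.span {Pi.single 0 1} : Ideal (ℕ → k))) ∧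
    ¬ IsReduced (TrivSqZeroExt (ℕ → k) (Ideal.span {Pi.single 0 1} : Ideal (ℕ → k))) ∧
    ¬ IsNoetherianRing (TrivSqZeroExt (ℕ → k) (Ideal.span {Pi.single 0 1} : Ideal (ℕ → k))) := by
  have := Pi.isSimpleModule_span_single_one (K := fun _ : ℕ ↦ k) 0
  have := IsSimpleModule.nontrivial (ℕ → k) (Ideal.span {Pi.single 0 1} : Ideal (ℕ → k))
  exact ⟨TrivSqZeroExt.isNilStarNoetherianRing, TrivSqZeroExt.not_isReduced,
    fun h ↦ Pi.not_isNoetherianRing h.of_trivSqZeroExt⟩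
end

section
/- Let S = k[x₁, x₂, ...] be the polynomial ring over a field k in countably infinitely many variables, and R = S/⟨xᵢ² : i ≥ 1⟩. Then the nilradical of R is the ideal generated by the images of all xᵢ, and it is not finitely generated; hence R is not Nil*-Noetherian. -/
/-- The ideal ⟨xᵢ² : i ≥ 1⟩ of k[x₁, x₂, ...] (variables indexed by ℕ). -/
noncomputable def relIdeal17 (k : Type*) [Field k] : Ideal (MvPolynomial ℕ k) :=
  Ideal.span (Set.range fun i : ℕ => MvPolynomial.X i ^ 2)

/-- The ring R = k[x₁, x₂, ...]/⟨xᵢ² : i ≥ 1⟩. -/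
abbrev Ring17 (k : Type*) [Field k] : Type _ := MvPolynomial ℕ k ⧸ relIdeal17 k

/-!
The variables generate a prime ideal of `k[x₁, x₂, ...]` (the kernel of the constant coefficient)
containing every `xᵢ²` and contained in the radical of `⟨xᵢ² : i⟩`, so it is that radical; its
image is the nilradical of the quotient. That image is not finitely generated: if it were, finitely
many of the `xᵢ` would generate it, yet for every `n` the evaluation `xₙ ↦ ε`, `xᵢ ↦ 0` (`i ≠ n`)
into the dual numbers `k[ε]` kills every `xᵢ²` and every `xᵢ` with `i ≠ n`, but not `xₙ`.
-/

open Set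

theorem Submodule.not_fg_span_range_of_notMem_span_image_ne {R M ι : Type*} [Semiring R]
    [AddCommMonoid M] [Module R M] [Infinite ι] {f : ι → M}
    (hf : ∀ i, f i ∉ span R (f '' {j | j ≠ i})) : ¬ (span R (range f)).FG := by
  classical
  rw [fg_span_iff_fg_span_finset_subset]
  rintro ⟨s, hs, hspan⟩
  rw [← image_univ, Finset.subset_set_image_iff] at hs
  obtain ⟨t, -, rfl⟩ := hs
  obtain ⟨i, hi⟩ := Infinite.exists_notMem_finset t
  have hmem : f i ∈ span R (f '' t) := by
    rw [← Finset.coe_image, ← hspan]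
    exact subset_span (mem_range_self i)
  exact hf i (span_mono (image_mono fun j hj => ne_of_mem_of_not_mem hj hi) hmem)

theorem Ideal.nilradical_quotient {R : Type*} [CommRing R] (I : Ideal R) :
    nilradical (R ⧸ I) = I.radical.map (Ideal.Quotient.mk I) := by
  rw [nilradical, Ideal.zero_eq_bot, ← Ideal.map_quotient_self I,
    Ideal.map_radical_of_surjective Ideal.Quotient.mk_surjective Ideal.mk_ker.le]

namespace MvPolynomial

variable {σ R : Type*} [CommRing R]

theorem mem_idealOfVars_iff {p : MvPolynomial σ R} :
    p ∈ idealOfVars σ R ↔ constantCoeff p = 0 := by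
  simpa [Nat.lt_one_iff, Finsupp.degree_eq_zero_iff, constantCoeff] using
    mem_pow_idealOfVars_iff' (σ := σ) 1 p

theorem ker_constantCoeff : RingHom.ker constantCoeff = idealOfVars σ R :=
  Ideal.ext fun _ => mem_idealOfVars_iff.symm

instance isPrime_idealOfVars [IsDomain R] : (idealOfVars σ R).IsPrime :=
  ker_constantCoeff (σ := σ) (R := R) ▸ RingHom.ker_isPrime _

theorem radical_span_range_X_pow [IsDomain R] {n : ℕ} (hn : n ≠ 0) :
    (Ideal.span (range fun i : σ => X (R := R) i ^ n)).radical = idealOfVars σ R := by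
  apply le_antisymm
  · rw [isPrime_idealOfVars.radical_le_iff, Ideal.span_le, range_subset_iff]
    exact fun i => Ideal.pow_mem_of_mem _ (Ideal.subset_span (mem_range_self i)) n hn.bot_lt
  · rw [idealOfVars, Ideal.span_le, range_subset_iff]
    exact fun i => ⟨n, Ideal.subset_span (mem_range_self i)⟩

theorem mk_X_notMem_span_mk_X_ne [Nontrivial R] (n : σ) :
    Ideal.Quotient.mk (Ideal.span (range fun i : σ => X (R := R) i ^ 2)) (X n) ∉
      Ideal.span ((fun i => Ideal.Quotient.mk _ (X i)) '' {i | i ≠ n}) := by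
  classical
  set mk := Ideal.Quotient.mk (Ideal.span (range fun i : σ => X (R := R) i ^ 2))
  let φ : MvPolynomial σ R →ₐ[R] DualNumber R := aeval (Pi.single n DualNumber.eps)
  have hker : Ideal.span (range fun i : σ => X (R := R) i ^ 2) ≤ RingHom.ker φ := by
    rw [Ideal.span_le, range_subset_iff]
    intro i
    by_cases hi : i = n
    · subst hi; simp [φ, pow_two]
    · simp [φ, hi]
  let ψ := Ideal.Quotient.lift _ φ.toRingHom hker
  have hspan : Ideal.span ((fun i => mk (X i)) '' {i | i ≠ n}) ≤ RingHom.ker ψ := by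
    rw [Ideal.span_le, image_subset_iff]
    intro i hi
    simp [ψ, mk, φ, Pi.single_eq_of_ne hi]
  intro h
  have := hspan h
  simpa [ψ, mk, φ] using congrArg TrivSqZeroExt.snd this

end MvPolynomial

theorem example_quotient_not_nilStarNoetherian (k : Type*) [Field k] :
    nilradical (Ring17 k) =
      Ideal.span (Set.range fun i : ℕ =>
        Ideal.Quotient.mk (relIdeal17 k) (MvPolynomial.X i)) ∧
    ¬ (nilradical (Ring17 k)).FG ∧
    ¬ IsNilStarNoetherianRing (Ring17 k) := by
  have hnil : nilradical (Ring17 k) =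
      Ideal.span (Set.range fun i : ℕ => Ideal.Quotient.mk (relIdeal17 k) (MvPolynomial.X i)) := by
    rw [Ideal.nilradical_quotient, show (relIdeal17 k).radical = MvPolynomial.idealOfVars ℕ k from
      MvPolynomial.radical_span_range_X_pow two_ne_zero, Ideal.map_span, ← range_comp]
    rfl
  have hnotFG : ¬ (nilradical (Ring17 k)).FG := by
    rw [hnil]
    exact Submodule.not_fg_span_range_of_notMem_span_image_ne MvPolynomial.mk_X_notMem_span_mk_X_ne
  exact ⟨hnil, hnotFG, fun h => hnotFG (h _ le_rfl)⟩
end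

section
/- A nonzero nil ideal of a commutative ring R is never projective as an R-module. -/
/-!
For a linear form `f` on an ideal `I` one has `a * f b = b * f a`. Writing `x ∈ I` through a dual
basis `(e, f_e)` of a projective `I` gives `x = ∑ f_e x * e = (∑ f_e e) * x`, so `x = t * x` with
`t` in the trace ideal. If `I` is nil, every value `f y` is nilpotent, hence so is `t`; then `1 - t`
is a unit and `x = 0`.
-/

def Module.traceIdeal (R M : Type*) [CommRing R] [AddCommGroup M] [Module R M] : Ideal R :=
  ⨆ f : M →ₗ[R] R, LinearMap.range f

namespace Ideal

variable {R : Type*} [CommRing R] {I : Ideal R}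

theorem mul_apply_comm (f : I →ₗ[R] R) (a b : I) : (a : R) * f b = (b : R) * f a := by
  rw [← smul_eq_mul, ← map_smul, ← smul_eq_mul (b : R), ← map_smul]
  congr 1
  ext
  simp [mul_comm]

theorem isNilpotent_apply_of_isNilpotent (f : I →ₗ[R] R) {y : I} (hy : IsNilpotent (y : R)) :
    IsNilpotent (f y) := by
  obtain ⟨n, hn⟩ := hy
  have hvanish : ∀ k m, (y : R) ^ (k + m) = 0 → f y ^ k * (y : R) ^ m = 0 := by
    intro k
    induction k with
    | zero => simp
    | succ k ih =>
      intro m hkm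
      have hzero : f y ^ k • (y : R) ^ m • y = 0 := by
        ext
        simpa [← pow_succ] using ih (m + 1) (by rwa [← add_assoc, add_right_comm])
      calc f y ^ (k + 1) * (y : R) ^ m = f (f y ^ k • (y : R) ^ m • y) := by
            simp only [map_smul, smul_eq_mul]; ring
        _ = 0 := by rw [hzero, map_zero]
  exact ⟨n, by simpa using hvanish n 0 (by simpa using hn)⟩

theorem traceIdeal_le_nilradical (h : I ≤ nilradical R) : Module.traceIdeal R I ≤ nilradical R :=
  iSup_le fun f ↦ by
    rintro _ ⟨y, rfl⟩
    exact isNilpotent_apply_of_isNilpotent f (h y.2)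

theorem exists_mem_traceIdeal_mul_eq_self [Module.Projective R I] (x : I) :
    ∃ t ∈ Module.traceIdeal R I, t * x = x := by
  obtain ⟨s, hs⟩ := Module.Projective.out (R := R) (P := I)
  refine ⟨∑ e ∈ (s x).support, s e e, Ideal.sum_mem _ fun e _ ↦ ?_, ?_⟩
  · exact le_iSup (fun f : I →ₗ[R] R ↦ LinearMap.range f) (Finsupp.lapply e ∘ₗ s) ⟨e, rfl⟩
  · have hx := congrArg Subtype.val (hs x)
    rw [Finsupp.linearCombination_apply, Finsupp.sum, Submodule.coe_sum] at hx
    conv_rhs => rw [← hx]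
    rw [Finset.sum_mul]
    refine Finset.sum_congr rfl fun e _ ↦ ?_
    have := mul_apply_comm (Finsupp.lapply e ∘ₗ s) e x
    simp only [LinearMap.comp_apply, Finsupp.lapply_apply] at this
    simp [this, mul_comm]

end Ideal

theorem nil_ideal_not_projective {R : Type*} [CommRing R] (I : Ideal R)
    (hne : I ≠ ⊥) (hnil : I ≤ nilradical R) : ¬ Module.Projective R I := by
  intro hproj
  obtain ⟨x, hxI, hx0⟩ := (Submodule.ne_bot_iff I).mp hne
  obtain ⟨t, ht, htx⟩ := Ideal.exists_mem_traceIdeal_mul_eq_self (⟨x, hxI⟩ : I)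
  have hunit : IsUnit (1 - t) :=
    (mem_nilradical.mp (Ideal.traceIdeal_le_nilradical hnil ht)).isUnit_one_sub
  exact hx0 (hunit.mul_right_eq_zero.mp (by simp [sub_mul, htx]))
end

section
/- For a commutative ring R, the following are equivalent: (1) R is reduced; (2) every R-module M satisfies Ext¹_R(R/I, M) = 0 for every nil ideal I; (3) every R-module M satisfies Ext¹_R(R/I, M) = 0 for every finitely generated nil ideal I. -/
/-!
Vanishing of `Ext¹(R ⧸ I, -)` makes `R ⧸ I` projective, and for a nil ideal `I` that forces
`I = 0`: a splitting of `R → R ⧸ I` sends `1` to a lift `t` of `1`, a unit since `1 - t` is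
nilpotent, and `I` annihilates `t`. Conversely, over a reduced ring every nil ideal is `0` and
`R ⧸ 0 ≅ R` is projective. A nilpotent element generates a finitely generated nil ideal, which is
why finitely generated ideals suffice.
-/

open CategoryTheory Limits

universe u

section ProjectiveCriterion

variable {R : Type*} [Ring R] {C : Type*} [Category C] [Abelian C] [Linear R C]
  [EnoughProjectives C]

lemma CategoryTheory.ProjectiveResolution.exists_d_comp_eq_of_subsingleton_ext_one {X : C}
    (P : ProjectiveResolution X) {Y : C} [Subsingleton (((Ext R C 1).obj (.op X)).obj Y)]
    (k : P.complex.X 1 ⟶ Y) (hk : P.complex.d 2 1 ≫ k = 0) :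
    ∃ w : P.complex.X 0 ⟶ Y, P.complex.d 1 0 ≫ w = k := by
  have hzero : IsZero ((P.complex.linearYonedaObj R Y).homology 1) :=
    (ModuleCat.isZero_of_subsingleton _).of_iso (P.isoExt 1 Y).symm
  have hexact := ((P.complex.linearYonedaObj R Y).exactAt_iff' 0 1 2 (by simp) (by simp)).1
    ((HomologicalComplex.exactAt_iff_isZero_homology _ _).2 hzero)
  rw [ShortComplex.moduleCat_exact_iff] at hexact
  exact hexact k hk

theorem projective_of_forall_subsingleton_ext_one (X : C)
    (h : ∀ Y : C, Subsingleton (((Ext R C 1).obj (.op X)).obj Y)) : Projective X := by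
  have P : ProjectiveResolution X := ProjectiveResolution.of X
  let π : P.complex.X 0 ⟶ X := P.π.f 0
  have : Epi π := inferInstanceAs (Epi (P.π.f 0))
  have hdπ : P.complex.d 1 0 ≫ π = 0 := P.complex_d_comp_π_f_zero
  -- The corestriction of `d` to `ker π` is a 1-cocycle; a cobounding `w` makes `𝟙 - w ≫ ι`
  -- vanish on the image of `d`, so it descends along `π = coker d` to a section of `π`.
  obtain ⟨w, hw⟩ := P.exists_d_comp_eq_of_subsingleton_ext_one (R := R)
    (kernel.lift π (P.complex.d 1 0) hdπ)
    (by rw [← cancel_mono (kernel.ι _), Category.assoc, kernel.lift_ι _ _ hdπ,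
      HomologicalComplex.d_comp_d, zero_comp])
  obtain ⟨s, hs⟩ : ∃ s : X ⟶ P.complex.X 0, π ≫ s = 𝟙 _ - w ≫ kernel.ι π :=
    ⟨_, (CokernelCofork.IsColimit.desc' P.isColimitCokernelCofork (𝟙 _ - w ≫ kernel.ι π)
      (by rw [Preadditive.comp_sub, reassoc_of% hw, kernel.lift_ι _ _ hdπ, Category.comp_id,
        sub_self])).2⟩
  refine Retract.projective (Y := P.complex.X 0) ⟨s, π, ?_⟩
  rw [← cancel_epi π, ← Category.assoc, hs, Preadditive.sub_comp, Category.assoc, kernel.condition,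
    comp_zero, sub_zero, Category.id_comp, Category.comp_id]

end ProjectiveCriterion

theorem Ideal.eq_bot_of_le_nilradical_of_projective {R : Type*} [CommRing R] {I : Ideal R}
    (hI : I ≤ nilradical R) [Module.Projective R (R ⧸ I)] : I = ⊥ := by
  obtain ⟨σ, hσ⟩ := Module.projective_lifting_property I.mkQ LinearMap.id I.mkQ_surjective
  have hσ1 : 1 - σ 1 ∈ I := by
    rw [← Ideal.Quotient.eq, map_one]
    exact (LinearMap.congr_fun hσ 1).symm
  have hunit : IsUnit (σ 1) := by
    simpa using (mem_nilradical.1 (hI hσ1)).isUnit_one_sub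
  refine eq_bot_iff.2 fun a ha => (Submodule.mem_bot R).2 ?_
  refine hunit.mul_left_eq_zero.1 ?_
  rw [← smul_eq_mul, ← map_smul, Algebra.smul_def, mul_one, Ideal.Quotient.algebraMap_eq,
    Ideal.Quotient.eq_zero_iff_mem.2 ha, map_zero]

section Ring

variable {R : Type u} [CommRing R]

lemma subsingleton_ext_one_quotient_of_isReduced [IsReduced R] (M : ModuleCat.{u} R) {I : Ideal R}
    (hI : I ≤ nilradical R) :
    Subsingleton (((Ext R (ModuleCat.{u} R) 1).obj (.op (ModuleCat.of R (R ⧸ I)))).obj M) := by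
  obtain rfl : I = ⊥ := by simpa [nilradical_eq_zero] using hI
  have : Module.Projective R (R ⧸ (⊥ : Ideal R)) :=
    .of_equiv (Submodule.quotEquivOfEqBot ⊥ rfl).symm
  exact ModuleCat.subsingleton_of_isZero (isZero_Ext_succ_of_projective _ M 0)

lemma Ideal.eq_bot_of_le_nilradical_of_forall_subsingleton_ext_one {I : Ideal R}
    (hI : I ≤ nilradical R)
    (h : ∀ M : ModuleCat.{u} R,
      Subsingleton (((Ext R (ModuleCat.{u} R) 1).obj (.op (ModuleCat.of R (R ⧸ I)))).obj M)) :
    I = ⊥ :=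
  have := (IsProjective.iff_projective _).2 (projective_of_forall_subsingleton_ext_one _ h)
  eq_bot_of_le_nilradical_of_projective hI

lemma isReduced_of_forall_fg_le_nilradical_subsingleton_ext_one
    (h : ∀ (M : ModuleCat.{u} R) (I : Ideal R), I ≤ nilradical R → I.FG →
      Subsingleton (((Ext R (ModuleCat.{u} R) 1).obj (.op (ModuleCat.of R (R ⧸ I)))).obj M)) :
    IsReduced R where
  eq_zero x hx :=
    have hle : Ideal.span {x} ≤ nilradical R :=
      (Ideal.span_singleton_le_iff_mem _).2 (mem_nilradical.2 hx)
    Ideal.span_singleton_eq_bot.1 <| Ideal.eq_bot_of_le_nilradical_of_forall_subsingleton_ext_one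
      hle (h · _ hle (Submodule.fg_span_singleton x))

end Ring

theorem reduced_iff_all_modules_nilStarInjective (R : Type u) [CommRing R] :
    (IsReduced R ↔
      ∀ (M : Type u) [AddCommGroup M] [Module R M], ∀ I : Ideal R, I ≤ nilradical R →
        Subsingleton (((Ext R (ModuleCat.{u} R) 1).obj
          (Opposite.op (ModuleCat.of R (R ⧸ I)))).obj (ModuleCat.of R M))) ∧
    ((∀ (M : Type u) [AddCommGroup M] [Module R M], ∀ I : Ideal R, I ≤ nilradical R →
        Subsingleton (((Ext R (ModuleCat.{u} R) 1).obj
          (Opposite.op (ModuleCat.of R (R ⧸ I)))).obj (ModuleCat.of R M))) ↔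
      (∀ (M : Type u) [AddCommGroup M] [Module R M], ∀ I : Ideal R, I ≤ nilradical R → I.FG →
        Subsingleton (((Ext R (ModuleCat.{u} R) 1).obj
          (Opposite.op (ModuleCat.of R (R ⧸ I)))).obj (ModuleCat.of R M)))) := by
  refine ⟨⟨fun _ M _ _ I hI => subsingleton_ext_one_quotient_of_isReduced _ hI, fun h => ?_⟩,
    ⟨fun h M _ _ I hI _ => h M I hI, fun h => ?_⟩⟩
  · exact isReduced_of_forall_fg_le_nilradical_subsingleton_ext_one fun M I hI _ => h M I hI
  · have := isReduced_of_forall_fg_le_nilradical_subsingleton_ext_one fun M I hI hfg =>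
      h M I hI hfg
    exact fun M _ _ I hI => subsingleton_ext_one_quotient_of_isReduced _ hI
end
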